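/- Consider T = 2 and the economy G_2 degenerate on the realization E^2 with A_1 = {a11, a12}, B_1 = {b11}, A_2 = {a21, a22}, B_2 = {b21, b22}. Suppose the discount factors δ ∈ [0,1) and utilities satisfy: δ_{a11}·u(a11,b21) > u(a11,b22) > u(a11,b11) > δ_{a11}·u(a11,b22) > 0; u(a12,b11) > 0 > max(u(a12,b21), u(a12,b22)); u(a21,b21) > 0 > max(u(a21,b11), u(a21,b22)); u(a22,b22) > u(a22,b21) > 0 > u(a22,b11); v(a11,b11) > v(a12,b11) > 0 > v(a21,b11), v(a22,b11); v(a22,b21) > v(a11,b21) > v(a21,b21) > 0 > v(a12,b21); v(a11,b22) > v(a22,b22) > 0 > max(v(a12,b22), v(a21,b22)). Then both of the following matchings are dynamically stable for G_2: m^L, which in period 1 matches a11 with b11 and in period 2 matches a21 with b21 and a22 with b22 (leaving a12 unmatched throughout); and m^R, which in period 1 matches a12 with b11 and in period 2 matches a11 with b21 and a22 with b22 (leaving a21 unmatched throughout). Consequently a12 is unmatched under m^L but matched under m^R, while a21 is unmatched under m^R but matched under m^L, so the two dynamically stable matchings leave different sets of agents unmatched. -/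

import Mathlib

namespace DynMatch

open scoped Classical

/-- A realization of arrivals of length `t`: in each period `i < t`, the sets of agents
arriving on side `A` and on side `B`; arrival sets are pairwise disjoint on each side. -/
structure Realization (A B : Type) (t : ℕ) where
  arrA : Fin t → Finset A
  arrB : Fin t → Finset B
  disjA : ∀ i j : Fin t, i ≠ j → Disjoint (arrA i) (arrA j)
  disjB : ∀ i j : Fin t, i ≠ j → Disjoint (arrB i) (arrB j)

namespace Realization

variable {A B : Type}

theorem ext' {t : ℕ} {E F : Realization A B t} (hA : E.arrA = F.arrA)
    (hB : E.arrB = F.arrB) : E = F := by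
  cases E; cases F; dsimp at hA hB; subst hA; subst hB; rfl

/-- The truncation of a realization to its first `s` periods. -/
def trunc {t : ℕ} (E : Realization A B t) {s : ℕ} (h : s ≤ t) : Realization A B s where
  arrA i := E.arrA (Fin.castLE h i)
  arrB i := E.arrB (Fin.castLE h i)
  disjA i j hij := E.disjA _ _ fun hc => hij (Fin.castLE_injective h hc)
  disjB i j hij := E.disjB _ _ fun hc => hij (Fin.castLE_injective h hc)

theorem trunc_trunc {t s r : ℕ} (E : Realization A B t) (h : s ≤ t) (h' : r ≤ s) :
    (E.trunc h).trunc h' = E.trunc (h'.trans h) := by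
  apply ext' <;> funext i <;> (simp only [trunc]; congr 1)

/-- Cumulative arrivals on side `A` through period `s`. -/
noncomputable def Abar {t : ℕ} (E : Realization A B t) (s : ℕ) : Finset A :=
  Finset.univ.biUnion fun i : Fin t => if (i : ℕ) < s then E.arrA i else ∅

/-- Cumulative arrivals on side `B` through period `s`. -/
noncomputable def Bbar {t : ℕ} (E : Realization A B t) (s : ℕ) : Finset B :=
  Finset.univ.biUnion fun i : Fin t => if (i : ℕ) < s then E.arrB i else ∅

theorem mem_Abar {t : ℕ} (E : Realization A B t) (s : ℕ) (a : A) :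
    a ∈ E.Abar s ↔ ∃ i : Fin t, (i : ℕ) < s ∧ a ∈ E.arrA i := by
  simp only [Abar, Finset.mem_biUnion, Finset.mem_univ, true_and]
  constructor
  · rintro ⟨i, hi⟩
    by_cases h : (i : ℕ) < s
    · exact ⟨i, h, by simpa [h] using hi⟩
    · simp [h] at hi
  · rintro ⟨i, h, hi⟩
    exact ⟨i, by simp [h, hi]⟩

theorem mem_Bbar {t : ℕ} (E : Realization A B t) (s : ℕ) (b : B) :
    b ∈ E.Bbar s ↔ ∃ i : Fin t, (i : ℕ) < s ∧ b ∈ E.arrB i := by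
  simp only [Bbar, Finset.mem_biUnion, Finset.mem_univ, true_and]
  constructor
  · rintro ⟨i, hi⟩
    by_cases h : (i : ℕ) < s
    · exact ⟨i, h, by simpa [h] using hi⟩
    · simp [h] at hi
  · rintro ⟨i, h, hi⟩
    exact ⟨i, by simp [h, hi]⟩

end Realization

/-- `Follows F E` : the realization `F` follows (extends) the realization `E`,
i.e. `E` is a truncation of `F`. -/
def Follows {A B : Type} {s t : ℕ} (F : Realization A B t) (E : Realization A B s) : Prop :=
  ∃ h : s ≤ t, F.trunc h = E

variable {A B : Type}

/-- A period-`t` matching for the realization `E`: a one-to-one pairing between the agents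
on side `A` and side `B` that have arrived through period `t`; `none` encodes being
unmatched (i.e. matched to oneself). -/
structure PeriodMatching {t : ℕ} (E : Realization A B t) where
  mA : A → Option B
  mB : B → Option A
  inv : ∀ a b, mA a = some b ↔ mB b = some a
  memA : ∀ a b, mA a = some b → a ∈ E.Abar t ∧ b ∈ E.Bbar t

/-- A matching for the dynamic economy: a period matching for every realization of every
length, subject to irreversibility. -/
structure Matching (A B : Type) where
  pm : ∀ {t : ℕ} (E : Realization A B t), PeriodMatching E
  irrevA : ∀ {s t : ℕ} (h : s ≤ t) (E : Realization A B t) (a : A) (b : B),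
    (pm (E.trunc h)).mA a = some b → (pm E).mA a = some b

/-- Primitives of the market: Bernoulli utilities and discount factors in `[0,1)`.
The utility of remaining unmatched is normalized to `0` (`u(a,a)=0`, `v(b,b)=0`). -/
structure Market (A B : Type) where
  u : A → B → ℝ
  v : A → B → ℝ
  dA : A → ℝ
  dB : B → ℝ
  dA_nonneg : ∀ a, 0 ≤ dA a
  dA_lt_one : ∀ a, dA a < 1
  dB_nonneg : ∀ b, 0 ≤ dB b
  dB_lt_one : ∀ b, dB b < 1

/-- An economy of length `T`: a probability distribution on realizations of length `T`. -/
structure Economy (A B : Type) (T : ℕ) where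
  prob : Realization A B T → ℝ
  nonneg : ∀ E, 0 ≤ prob E
  finsupp : (Function.support prob).Finite
  total : ∑ᶠ E, prob E = 1

/-- Total mass of realizations following `E`. -/
noncomputable def condMass {T t : ℕ} (G : Economy A B T) (E : Realization A B t) : ℝ :=
  ∑ᶠ (F : Realization A B T) (_ : Follows F E), G.prob F

/-- Conditional probability of the length-`T` realization `F` given the truncation `E`. -/
noncomputable def cond {T t : ℕ} (G : Economy A B T) (E : Realization A B t)
    (F : Realization A B T) : ℝ :=
  if Follows F E then G.prob F / condMass G E else 0

/-- `E` is in the support of the economy `G`. -/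
def InSupport {T t : ℕ} (G : Economy A B T) (E : Realization A B t) : Prop :=
  ∃ F : Realization A B T, Follows F E ∧ 0 < G.prob F

/-- The first period `s` with `t ≤ s ≤ n` at which `a` is matched under `m` along the
realization `F`; equal to `n` if `a` stays unmatched. -/
noncomputable def matchTimeA (m : Matching A B) {n : ℕ} (F : Realization A B n) (a : A)
    (t : ℕ) : ℕ :=
  sInf ({ s : ℕ | t ≤ s ∧ ∃ h : s ≤ n, ((m.pm (F.trunc h)).mA a).isSome } ∪ {n})

noncomputable def matchTimeB (m : Matching A B) {n : ℕ} (F : Realization A B n) (b : B)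
    (t : ℕ) : ℕ :=
  sInf ({ s : ℕ | t ≤ s ∧ ∃ h : s ≤ n, ((m.pm (F.trunc h)).mB b).isSome } ∪ {n})

/-- Expected discounted payoff of side-`A` agent `a` from matching `m` at date `t`,
when the realization so far is `E`. -/
noncomputable def Upay (M : Market A B) {T : ℕ} (G : Economy A B T) (m : Matching A B)
    (a : A) {t : ℕ} (E : Realization A B t) : ℝ :=
  ∑ᶠ F : Realization A B T,
    cond G E F * (M.dA a ^ (matchTimeA m F a t - t) * ((m.pm F).mA a).elim 0 (M.u a))

/-- Expected discounted payoff of side-`B` agent `b` from matching `m` at date `t`. -/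
noncomputable def Vpay (M : Market A B) {T : ℕ} (G : Economy A B T) (m : Matching A B)
    (b : B) {t : ℕ} (E : Realization A B t) : ℝ :=
  ∑ᶠ F : Realization A B T,
    cond G E F * (M.dB b ^ (matchTimeB m F b t - t) * ((m.pm F).mB b).elim 0 (fun a => M.v a b))

/-- The set of side-`A` agents available to match at `E` (arrived and unmatched as of the
previous period). -/
noncomputable def availA (m : Matching A B) {t : ℕ} (E : Realization A B t) : Finset A :=
  (E.Abar t).filter fun a => (m.pm (E.trunc (Nat.sub_le t 1))).mA a = none

noncomputable def availB (m : Matching A B) {t : ℕ} (E : Realization A B t) : Finset B :=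
  (E.Bbar t).filter fun b => (m.pm (E.trunc (Nat.sub_le t 1))).mB b = none

/-- The agents on side `A` left unmatched at the end of the last period of `E` under `m`. -/
noncomputable def unmatchedA (m : Matching A B) {t : ℕ} (E : Realization A B t) : Finset A :=
  (E.Abar t).filter fun a => (m.pm E).mA a = none

noncomputable def unmatchedB (m : Matching A B) {t : ℕ} (E : Realization A B t) : Finset B :=
  (E.Bbar t).filter fun b => (m.pm E).mB b = none

/-- `mbar` coincides with `m` at every realization (of length `≤ T`) that does not
follow `E`: membership in `M_T(m, E^t)`. -/
def SameOff (T : ℕ) (m mbar : Matching A B) {t : ℕ} (E : Realization A B t) : Prop :=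
  ∀ (s : ℕ), s ≤ T → ∀ F : Realization A B s, ¬ Follows F E → mbar.pm F = m.pm F

/-- Static stability of a one-period matching of the pools `(Ah, Bh)` with respect to the
true utilities: individual rationality plus absence of blocking pairs. -/
def IsStaticStable (M : Market A B) (Ah : Finset A) (Bh : Finset B)
    (mA : A → Option B) (mB : B → Option A) : Prop :=
  (∀ a ∈ Ah, 0 ≤ (mA a).elim 0 (M.u a)) ∧
  (∀ b ∈ Bh, 0 ≤ (mB b).elim 0 (fun a => M.v a b)) ∧
  ¬ ∃ a ∈ Ah, ∃ b ∈ Bh,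
      (mA a).elim 0 (M.u a) < M.u a b ∧ (mB b).elim 0 (fun a' => M.v a' b) < M.v a b

/-- The period-`t` matching `m(E^t)` is stable amongst those who match in period `t`. -/
def StableAmongMatched (M : Market A B) (m : Matching A B) {t : ℕ}
    (E : Realization A B t) : Prop :=
  (∀ a ∈ availA m E, ∀ b, (m.pm E).mA a = some b → 0 ≤ M.u a b) ∧
  (∀ b ∈ availB m E, ∀ a, (m.pm E).mB b = some a → 0 ≤ M.v a b) ∧
  ¬ ∃ a ∈ availA m E, ∃ b ∈ availB m E,
      ((m.pm E).mA a).isSome ∧ ((m.pm E).mB b).isSome ∧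
      ((m.pm E).mA a).elim 0 (M.u a) < M.u a b ∧
      ((m.pm E).mB b).elim 0 (fun a' => M.v a' b) < M.v a b

/-- The continuation realization induced by a length-`n` realization `F` after period `t`,
given the matching `m`: its first-period arrivals consist of the agents left unmatched by
`m` at the end of period `t` together with the period-`t+1` arrivals of `F`; afterwards it
coincides with `F`. -/
noncomputable def contReal (m : Matching A B) {n : ℕ} (F : Realization A B n) (t : ℕ) :
    Realization A B (n - t) where
  arrA i :=
    if (i : ℕ) = 0 then
      unmatchedA m (F.trunc (show t ≤ n by have := i.isLt; omega)) ∪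
        F.arrA ⟨t, by have := i.isLt; omega⟩
    else F.arrA ⟨t + (i : ℕ), by have := i.isLt; omega⟩
  arrB i :=
    if (i : ℕ) = 0 then
      unmatchedB m (F.trunc (show t ≤ n by have := i.isLt; omega)) ∪
        F.arrB ⟨t, by have := i.isLt; omega⟩
    else F.arrB ⟨t + (i : ℕ), by have := i.isLt; omega⟩
  disjA := by
    intro i j hij
    have hi := i.isLt; have hj := j.isLt
    have hne : (i : ℕ) ≠ (j : ℕ) := fun hc => hij (Fin.ext hc)
    have key : ∀ (S : Finset A) (k : ℕ) (hk : k < n), (∀ a ∈ S, ∃ l : ℕ, l ≤ t ∧ ∃ hl : l < n,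
        a ∈ F.arrA ⟨l, hl⟩) → t < k → Disjoint S (F.arrA ⟨k, hk⟩) := by
      intro S k hk hS htk
      refine Finset.disjoint_left.mpr ?_
      intro a haS hak
      obtain ⟨l, hlt, hl, hal⟩ := hS a haS
      have hne' : (⟨l, hl⟩ : Fin n) ≠ ⟨k, hk⟩ := by
        intro hc
        have : l = k := congrArg Fin.val hc
        omega
      exact Finset.disjoint_left.mp (F.disjA _ _ hne') hal hak
    have hsub : ∀ (ht : t ≤ n) a, a ∈ unmatchedA m (F.trunc ht) ∪ F.arrA ⟨t, by
        have : (0:ℕ) < n - t ∨ True := Or.inr trivial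
        exact lt_of_lt_of_le (Nat.lt_succ_self t) (by omega)⟩ → True := fun _ _ _ => trivial
    try dsimp only
    split_ifs with h0i h0j h0j
    · omega
    · -- i = 0, j ≠ 0
      apply Finset.disjoint_union_left.mpr
      constructor
      · refine key _ _ _ ?_ (by omega)
        intro a ha
        have ha' := Finset.mem_filter.mp ha
        obtain ⟨k, hk, hak⟩ := (Realization.mem_Abar _ _ _).mp ha'.1
        refine ⟨(k : ℕ), by omega, by omega, ?_⟩
        simpa [Realization.trunc, Fin.castLE] using hak
      · refine key _ _ _ ?_ (by omega)
        intro a ha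
        exact ⟨t, le_refl t, by omega, ha⟩
    · -- j = 0, i ≠ 0
      apply Disjoint.symm
      apply Finset.disjoint_union_left.mpr
      constructor
      · refine key _ _ _ ?_ (by omega)
        intro a ha
        have ha' := Finset.mem_filter.mp ha
        obtain ⟨k, hk, hak⟩ := (Realization.mem_Abar _ _ _).mp ha'.1
        refine ⟨(k : ℕ), by omega, by omega, ?_⟩
        simpa [Realization.trunc, Fin.castLE] using hak
      · refine key _ _ _ ?_ (by omega)
        intro a ha
        exact ⟨t, le_refl t, by omega, ha⟩
    · exact F.disjA ⟨t + i, by omega⟩ ⟨t + j, by omega⟩ (by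
        intro hc
        have : t + (i : ℕ) = t + (j : ℕ) := congrArg Fin.val hc
        omega)
  disjB := by
    intro i j hij
    have hi := i.isLt; have hj := j.isLt
    have hne : (i : ℕ) ≠ (j : ℕ) := fun hc => hij (Fin.ext hc)
    have key : ∀ (S : Finset B) (k : ℕ) (hk : k < n), (∀ b ∈ S, ∃ l : ℕ, l ≤ t ∧ ∃ hl : l < n,
        b ∈ F.arrB ⟨l, hl⟩) → t < k → Disjoint S (F.arrB ⟨k, hk⟩) := by
      intro S k hk hS htk
      refine Finset.disjoint_left.mpr ?_
      intro b hbS hbk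
      obtain ⟨l, hlt, hl, hbl⟩ := hS b hbS
      have hne' : (⟨l, hl⟩ : Fin n) ≠ ⟨k, hk⟩ := by
        intro hc
        have : l = k := congrArg Fin.val hc
        omega
      exact Finset.disjoint_left.mp (F.disjB _ _ hne') hbl hbk
    try dsimp only
    split_ifs with h0i h0j h0j
    · omega
    · apply Finset.disjoint_union_left.mpr
      constructor
      · refine key _ _ _ ?_ (by omega)
        intro b hb
        have hb' := Finset.mem_filter.mp hb
        obtain ⟨k, hk, hbk⟩ := (Realization.mem_Bbar _ _ _).mp hb'.1
        refine ⟨(k : ℕ), by omega, by omega, ?_⟩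
        simpa [Realization.trunc, Fin.castLE] using hbk
      · refine key _ _ _ ?_ (by omega)
        intro b hb
        exact ⟨t, le_refl t, by omega, hb⟩
    · apply Disjoint.symm
      apply Finset.disjoint_union_left.mpr
      constructor
      · refine key _ _ _ ?_ (by omega)
        intro b hb
        have hb' := Finset.mem_filter.mp hb
        obtain ⟨k, hk, hbk⟩ := (Realization.mem_Bbar _ _ _).mp hb'.1
        refine ⟨(k : ℕ), by omega, by omega, ?_⟩
        simpa [Realization.trunc, Fin.castLE] using hbk
      · refine key _ _ _ ?_ (by omega)
        intro b hb
        exact ⟨t, le_refl t, by omega, hb⟩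
    · exact F.disjB ⟨t + i, by omega⟩ ⟨t + j, by omega⟩ (by
        intro hc
        have : t + (i : ℕ) = t + (j : ℕ) := congrArg Fin.val hc
        omega)

/-- The pushforward of the conditional distribution `G(·|E)` under the map sending a
length-`T` realization `F` following `E` to the induced continuation realization. -/
noncomputable def contPush {T : ℕ} (G : Economy A B T) (m : Matching A B) {t : ℕ}
    (E : Realization A B t) : Realization A B (T - t) → ℝ := fun F' =>
  ∑ᶠ (F : Realization A B T) (_ : Follows F E ∧ contReal m F t = F'), cond G E F

/-- The empty realization. -/
def emptyRealization (A B : Type) (n : ℕ) : Realization A B n :=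
  ⟨fun _ => ∅, fun _ => ∅, fun _ _ _ => Finset.disjoint_empty_left ∅,
    fun _ _ _ => Finset.disjoint_empty_left ∅⟩

/-- The point mass at the empty realization. -/
noncomputable def pointEconomy (A B : Type) (n : ℕ) : Economy A B n where
  prob F := if F = emptyRealization A B n then 1 else 0
  nonneg := by intro E; (try dsimp only); split <;> norm_num
  finsupp := by
    apply Set.Finite.subset (Set.finite_singleton (emptyRealization A B n))
    intro x hx
    by_contra hne
    simp only [Set.mem_singleton_iff] at hne
    simp [Function.mem_support, hne] at hx
  total := by
    rw [finsum_eq_single _ (emptyRealization A B n) (fun x hx => if_neg hx)]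
    simp

/-- The continuation economy of length `T - t` induced by the matching `m` and the
realization `E`: arrivals in its first period are the agents left unmatched by `m` at
the end of period `t` together with the period-`t+1` arrivals, and subsequent arrivals
are as in the original economy, with probabilities given by `G(·|E)`. -/
noncomputable def contEconomy {T : ℕ} (G : Economy A B T) (m : Matching A B) {t : ℕ}
    (E : Realization A B t) : Economy A B (T - t) :=
  if h : ∃ Ec : Economy A B (T - t), Ec.prob = contPush G m E then h.choose
  else pointEconomy A B (T - t)

/-- The continuation of `mbar` after `(t, E)`, restricted to the agents not yet matched
at the end of period `t`, coincides with the matching `m'` of the continuation economy. -/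
def ContAgrees (T : ℕ) (mbar m' : Matching A B) {t : ℕ} (E : Realization A B t) : Prop :=
  ∀ (s : ℕ), 1 ≤ s → t + s ≤ T → ∀ F : Realization A B (t + s), Follows F E →
    (∀ a : A, (mbar.pm E).mA a = none →
      (m'.pm (contReal mbar F t)).mA a = (mbar.pm F).mA a) ∧
    (∀ b : B, (mbar.pm E).mB b = none →
      (m'.pm (contReal mbar F t)).mB b = (mbar.pm F).mB b)

/-- The conjecture set for a side-`A` agent `a` available at `(t, E)`, given a candidate
solution correspondence `D` for continuation economies of length `T - t`. -/
def ConjA (M : Market A B) {T : ℕ} (G : Economy A B T) {t : ℕ} (E : Realization A B t)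
    (m : Matching A B) (a : A) (D : Economy A B (T - t) → Set (Matching A B)) :
    Set (Matching A B) :=
  { mbar | SameOff T m mbar E ∧ (mbar.pm E).mA a = none ∧ StableAmongMatched M mbar E ∧
      ∃ m' ∈ D (contEconomy G mbar E), ContAgrees T mbar m' E }

/-- The conjecture set for a side-`B` agent `b` available at `(t, E)`. -/
def ConjB (M : Market A B) {T : ℕ} (G : Economy A B T) {t : ℕ} (E : Realization A B t)
    (m : Matching A B) (b : B) (D : Economy A B (T - t) → Set (Matching A B)) :
    Set (Matching A B) :=
  { mbar | SameOff T m mbar E ∧ (mbar.pm E).mB b = none ∧ StableAmongMatched M mbar E ∧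
      ∃ m' ∈ D (contEconomy G mbar E), ContAgrees T mbar m' E }

/-- Dynamic stability, defined by recursion on the horizon `T`:
(DS2)/(DS3) no available agent benefits from being unavailable to match, relative to some
conjecture whose continuation is dynamically stable for the continuation economy; and
(DS1) no pair of contemporaneously available agents form a blocking pair. -/
noncomputable def DynStable (M : Market A B) (T : ℕ) : Economy A B T → Set (Matching A B) :=
  fun G =>
  { m | ∀ t : ℕ, 1 ≤ t → t ≤ T → ∀ E : Realization A B t, InSupport G E →
      (∀ a ∈ availA m E, ∃ mbar ∈ ConjA M G E m a (DynStable M (T - t)),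
          Upay M G mbar a E ≤ Upay M G m a E) ∧
      (∀ b ∈ availB m E, ∃ mbar ∈ ConjB M G E m b (DynStable M (T - t)),
          Vpay M G mbar b E ≤ Vpay M G m b E) ∧
      ¬ ∃ a ∈ availA m E, ∃ b ∈ availB m E,
          Upay M G m a E < M.u a b ∧ Vpay M G m b E < M.v a b }
termination_by T
decreasing_by all_goals omega

/-- The conjecture set `M_D(a, m, E^t)` for a side-`A` agent. -/
noncomputable def MD_A (M : Market A B) {T : ℕ} (G : Economy A B T) {t : ℕ}
    (E : Realization A B t) (m : Matching A B) (a : A) : Set (Matching A B) :=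
  ConjA M G E m a (DynStable M (T - t))

/-- The conjecture set `M_D(b, m, E^t)` for a side-`B` agent. -/
noncomputable def MD_B (M : Market A B) {T : ℕ} (G : Economy A B T) {t : ℕ}
    (E : Realization A B t) (m : Matching A B) (b : B) : Set (Matching A B) :=
  ConjB M G E m b (DynStable M (T - t))

end DynMatch

/-!
The economy is degenerate, so every payoff is a discounted utility along the one realization
and each condition of dynamic stability can be checked on explicit matchings. In the last period
a deviator can only stay single, so dynamic stability there is static stability among the
available agents. In the first period each deviation is answered by an explicit conjecture: pairs
of first-period agents, stable among themselves, followed by a statically stable matching of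
everybody still single. If `a11` waits under `m^L`, then `a12` takes `b11` and `a11` ends with
`b22`, worth `δ u(a11,b22) < u(a11,b11)`; if it waits under `m^R`, it still gets `b21`. If `a12`
waits, it stays single along the path of `m^L`; if `b11` waits, it gets `a12` one period late.
-/

namespace PEquiv

variable {α β : Type*}

section Restrict

variable {f g : α ≃. β} {s s' : Set α} {t t' : Set β} [DecidablePred (· ∈ s)]
  [DecidablePred (· ∈ s')] [DecidablePred (· ∈ t)] [DecidablePred (· ∈ t')]

def restrict (f : α ≃. β) (s : Set α) (t : Set β) [DecidablePred (· ∈ s)]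
    [DecidablePred (· ∈ t)] : α ≃. β :=
  (ofSet s).trans (f.trans (ofSet t))

theorem restrict_eq_some {a : α} {b : β} :
    f.restrict s t a = some b ↔ f a = some b ∧ a ∈ s ∧ b ∈ t := by
  simp only [restrict, trans_eq_some, ofSet_eq_some_iff]
  constructor
  · rintro ⟨_, ⟨rfl, ha⟩, _, hab, rfl, hb⟩
    exact ⟨hab, ha, hb⟩
  · rintro ⟨hab, ha, hb⟩
    exact ⟨a, ⟨rfl, ha⟩, b, hab, rfl, hb⟩

theorem symm_restrict : (f.restrict s t).symm = f.symm.restrict t s := by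
  simp only [restrict, symm_trans_rev, ofSet_symm, trans_assoc]

theorem restrict_apply_congr {a : α}
    (h : ∀ b, f a = some b → (a ∈ s ↔ a ∈ s') ∧ (b ∈ t ↔ b ∈ t')) :
    f.restrict s t a = f.restrict s' t' a :=
  Option.ext fun b => by
    simp only [restrict_eq_some]
    exact ⟨fun ⟨hab, ha, hb⟩ => ⟨hab, (h b hab).1.1 ha, (h b hab).2.1 hb⟩,
      fun ⟨hab, ha, hb⟩ => ⟨hab, (h b hab).1.2 ha, (h b hab).2.2 hb⟩⟩

theorem restrict_apply_of_mem {a : α} (ha : a ∈ s) (h : ∀ b, f a = some b → b ∈ t) :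
    f.restrict s t a = f a :=
  Option.ext fun b => by
    rw [restrict_eq_some]
    exact ⟨fun hab => hab.1, fun hab => ⟨hab, ha, h b hab⟩⟩

theorem restrict_eq_self (h : ∀ a b, f a = some b → a ∈ s ∧ b ∈ t) : f.restrict s t = f :=
  ext fun a => Option.ext fun b => by
    rw [restrict_eq_some]
    exact ⟨fun hab => hab.1, fun hab => ⟨hab, h a b hab⟩⟩

theorem restrict_mono (hfg : f ≤ g) (hs : s ⊆ s') (ht : t ⊆ t') :
    f.restrict s t ≤ g.restrict s' t' := fun a b hab => by
  rw [Option.mem_def, restrict_eq_some] at hab ⊢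
  exact ⟨hfg a b hab.1, hs hab.2.1, ht hab.2.2⟩

end Restrict

theorem symm_le_symm {f g : α ≃. β} (h : f ≤ g) : f.symm ≤ g.symm := fun b a hab => by
  rw [Option.mem_def, eq_some_iff] at hab ⊢
  exact h a b hab

theorem symm_eq_none_of_le {f g : α ≃. β} (h : f ≤ g) {a : α} {b : β} (hfa : f a = none)
    (hgab : g a = some b) : f.symm b = none := by
  refine Option.eq_none_iff_forall_ne_some.2 fun a' ha' => ?_
  rw [eq_some_iff] at ha'
  obtain rfl : a' = a := g.inj (h a' b ha') hgab
  simp [hfa] at ha'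

section Update

variable [DecidableEq α] [DecidableEq β]

def update (f : α ≃. β) (a : α) (b : β) : α ≃. β where
  toFun x := if x = a then some b else if f x = some b then none else f x
  invFun y := if y = b then some a else if f.symm y = some a then none else f.symm y
  inv x y := by
    have hxy : f.symm y = some x ↔ f x = some y := f.eq_some_iff
    have hay : f.symm y = some a ↔ f a = some y := f.eq_some_iff
    have hinj : ∀ {x x' : α} {y : β}, f x = some y → f x' = some y → x = x' :=
      fun h h' => f.inj h h'
    grind

theorem update_apply (f : α ≃. β) (a : α) (b : β) (x : α) :
    f.update a b x = if x = a then some b else if f x = some b then none else f x :=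
  rfl

theorem symm_update (f : α ≃. β) (a : α) (b : β) : (f.update a b).symm = f.symm.update b a :=
  rfl

theorem update_eq_some_imp {f : α ≃. β} {a x : α} {b y : β} (h : f.update a b x = some y) :
    (x = a ∧ y = b) ∨ f x = some y := by
  rw [update_apply] at h
  split_ifs at h with hx hfx
  · exact Or.inl ⟨hx, (Option.some_injective _ h).symm⟩
  · exact Or.inr h

theorem eq_some_of_update_update_single {a₁ a₂ a₃ x : α} {b₁ b₂ b₃ y : β}
    (h : (((single a₁ b₁).update a₂ b₂).update a₃ b₃) x = some y) :
    (x = a₃ ∧ y = b₃) ∨ (x = a₂ ∧ y = b₂) ∨ (x = a₁ ∧ y = b₁) :=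
  (update_eq_some_imp h).imp_right fun h =>
    (update_eq_some_imp h).imp_right (mem_single_iff _ _ _ _).1

end Update

end PEquiv

namespace DynMatch

open scoped Classical

variable {A B : Type}

namespace Realization

theorem trunc_self {t : ℕ} (E : Realization A B t) (h : t ≤ t) : E.trunc h = E :=
  ext' rfl rfl

theorem Abar_trunc_subset {n s : ℕ} (F : Realization A B n) (h : s ≤ n) :
    (F.trunc h).Abar s ⊆ F.Abar n := fun a ha => by
  obtain ⟨i, -, hi⟩ := (mem_Abar _ _ _).1 ha
  exact (mem_Abar _ _ _).2 ⟨Fin.castLE h i, (Fin.castLE h i).isLt, hi⟩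

theorem Bbar_trunc_subset {n s : ℕ} (F : Realization A B n) (h : s ≤ n) :
    (F.trunc h).Bbar s ⊆ F.Bbar n := fun b hb => by
  obtain ⟨i, -, hi⟩ := (mem_Bbar _ _ _).1 hb
  exact (mem_Bbar _ _ _).2 ⟨Fin.castLE h i, (Fin.castLE h i).isLt, hi⟩

theorem notMem_Abar_zero {t : ℕ} (E : Realization A B t) (a : A) : a ∉ E.Abar 0 := by
  simp [mem_Abar]

theorem notMem_Bbar_zero {t : ℕ} (E : Realization A B t) (b : B) : b ∉ E.Bbar 0 := by
  simp [mem_Bbar]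

theorem mem_Abar_succ {t : ℕ} (F : Realization A B (t + 1)) (a : A) :
    a ∈ F.Abar (t + 1) ↔ a ∈ (F.trunc t.le_succ).Abar t ∨ a ∈ F.arrA (Fin.last t) := by
  simp only [mem_Abar, Fin.exists_fin_succ', Fin.is_lt, true_and]
  rfl

theorem mem_Bbar_succ {t : ℕ} (F : Realization A B (t + 1)) (b : B) :
    b ∈ F.Bbar (t + 1) ↔ b ∈ (F.trunc t.le_succ).Bbar t ∨ b ∈ F.arrB (Fin.last t) := by
  simp only [mem_Bbar, Fin.exists_fin_succ', Fin.is_lt, true_and]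
  rfl

theorem notMem_Abar_of_mem_arrA_last {t : ℕ} (F : Realization A B (t + 1)) {a : A}
    (ha : a ∈ F.arrA (Fin.last t)) : a ∉ (F.trunc t.le_succ).Abar t := fun h => by
  obtain ⟨i, -, hi⟩ := (mem_Abar _ _ _).1 h
  exact Finset.disjoint_left.1 (F.disjA _ _ (Fin.castSucc_lt_last i).ne) hi ha

theorem notMem_Bbar_of_mem_arrB_last {t : ℕ} (F : Realization A B (t + 1)) {b : B}
    (hb : b ∈ F.arrB (Fin.last t)) : b ∉ (F.trunc t.le_succ).Bbar t := fun h => by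
  obtain ⟨i, -, hi⟩ := (mem_Bbar _ _ _).1 h
  exact Finset.disjoint_left.1 (F.disjB _ _ (Fin.castSucc_lt_last i).ne) hi hb

end Realization

section Follows

variable {n s t : ℕ} {F : Realization A B n} {E : Realization A B t}

theorem follows_trunc (F : Realization A B n) (h : s ≤ n) : Follows F (F.trunc h) :=
  ⟨h, rfl⟩

theorem follows_refl (F : Realization A B n) : Follows F F :=
  ⟨le_rfl, F.trunc_self le_rfl⟩

theorem Follows.of_trunc (h : s ≤ n) (hF : Follows (F.trunc h) E) : Follows F E := by
  obtain ⟨hts, rfl⟩ := hF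
  exact ⟨hts.trans h, (Realization.trunc_trunc F h hts).symm⟩

theorem Follows.trunc (hF : Follows F E) (h : s ≤ n) (hts : t ≤ s) : Follows (F.trunc h) E := by
  obtain ⟨htn, rfl⟩ := hF
  exact ⟨hts, Realization.trunc_trunc F h hts⟩

theorem Follows.trunc_eq (hF : Follows F E) (h : s ≤ t) (h' : s ≤ n) :
    F.trunc h' = E.trunc h := by
  obtain ⟨htn, rfl⟩ := hF
  exact (Realization.trunc_trunc F htn h).symm

end Follows

namespace PeriodMatching

variable {n : ℕ} {F : Realization A B n}

theorem mA_eq_none_of_notMem (p : PeriodMatching F) {a : A} (ha : a ∉ F.Abar n) :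
    p.mA a = none :=
  Option.eq_none_iff_forall_ne_some.2 fun b hab => ha (p.memA a b hab).1

theorem mB_eq_none_of_notMem (p : PeriodMatching F) {b : B} (hb : b ∉ F.Bbar n) :
    p.mB b = none :=
  Option.eq_none_iff_forall_ne_some.2 fun a hab => hb (p.memA a b ((p.inv a b).2 hab)).2

def toPEquiv (p : PeriodMatching F) : A ≃. B :=
  ⟨p.mA, p.mB, fun a b => (p.inv a b).symm⟩

noncomputable def ofPEquiv (g : A ≃. B) (F : Realization A B n) : PeriodMatching F where
  mA := g.restrict ↑(F.Abar n) ↑(F.Bbar n)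
  mB := (g.restrict ↑(F.Abar n) ↑(F.Bbar n)).symm
  inv _ _ := (PEquiv.eq_some_iff _).symm
  memA _ _ h := (PEquiv.restrict_eq_some.1 h).2

variable {g g' : A ≃. B}

theorem ofPEquiv_mA_eq_some {a : A} {b : B} :
    (ofPEquiv g F).mA a = some b ↔ g a = some b ∧ a ∈ F.Abar n ∧ b ∈ F.Bbar n :=
  PEquiv.restrict_eq_some

theorem ofPEquiv_mA (hg : ∀ a b, g a = some b → a ∈ F.Abar n ∧ b ∈ F.Bbar n) :
    (ofPEquiv g F).mA = g :=
  congrArg DFunLike.coe (PEquiv.restrict_eq_self hg)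

theorem ofPEquiv_mB (hg : ∀ a b, g a = some b → a ∈ F.Abar n ∧ b ∈ F.Bbar n) :
    (ofPEquiv g F).mB = g.symm :=
  congrArg (fun f : A ≃. B => ⇑f.symm) (PEquiv.restrict_eq_self hg)

theorem ofPEquiv_mA_mono (hg : g ≤ g') {s : ℕ} (h : s ≤ n) {a : A} {b : B}
    (hab : (ofPEquiv g (F.trunc h)).mA a = some b) : (ofPEquiv g' F).mA a = some b :=
  PEquiv.restrict_mono hg (F.Abar_trunc_subset h) (F.Bbar_trunc_subset h) a b hab

end PeriodMatching

theorem Matching.irrevB (m : Matching A B) {s t : ℕ} (h : s ≤ t) (E : Realization A B t)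
    {a : A} {b : B} (hab : (m.pm (E.trunc h)).mB b = some a) : (m.pm E).mB b = some a :=
  ((m.pm E).inv a b).1 (m.irrevA h E a b (((m.pm _).inv a b).2 hab))

noncomputable def Matching.ofPEquiv (g : A ≃. B) : Matching A B where
  pm F := PeriodMatching.ofPEquiv g F
  irrevA h _ _ _ := PeriodMatching.ofPEquiv_mA_mono le_rfl h

noncomputable def Matching.replaceAfter (m : Matching A B) {t : ℕ} (E : Realization A B t)
    (γ : ℕ → A ≃. B) (hγ : Monotone γ)
    (hm : ∀ s (hs : s ≤ t), s < t → ∀ a b,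
      (m.pm (E.trunc hs)).mA a = some b → γ t a = some b) :
    Matching A B where
  pm {n} F := if Follows F E then PeriodMatching.ofPEquiv (γ n) F else m.pm F
  irrevA {s n} hsn F a b hab := by
    by_cases hF : Follows F E
    · rw [if_pos hF]
      by_cases hF' : Follows (F.trunc hsn) E
      · rw [if_pos hF'] at hab
        exact PeriodMatching.ofPEquiv_mA_mono (hγ hsn) hsn hab
      · rw [if_neg hF'] at hab
        have hst : s < t := lt_of_not_ge fun hts => hF' (hF.trunc hsn hts)
        have hmem := (m.pm _).memA a b hab
        rw [hF.trunc_eq hst.le hsn] at hab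
        exact PeriodMatching.ofPEquiv_mA_eq_some.2 ⟨hγ hF.fst a b (hm s hst.le hst a b hab),
          F.Abar_trunc_subset hsn hmem.1, F.Bbar_trunc_subset hsn hmem.2⟩
    · have hF' : ¬ Follows (F.trunc hsn) E := fun h => hF (h.of_trunc hsn)
      rw [if_neg hF'] at hab
      rw [if_neg hF]
      exact m.irrevA hsn F a b hab

noncomputable def Matching.freeze (m : Matching A B) {t : ℕ} (E : Realization A B t) :
    Matching A B :=
  m.replaceAfter E (fun _ => (m.pm (E.trunc (Nat.sub_le t 1))).toPEquiv) monotone_const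
    fun s hs hst a b hab =>
      m.irrevA (by omega : s ≤ t - 1) _ a b (by rwa [Realization.trunc_trunc])

section Freeze

variable {m : Matching A B} {t : ℕ} {E : Realization A B t} {n : ℕ} {F : Realization A B n}

theorem freeze_pm_of_follows (hF : Follows F E) :
    (m.freeze E).pm F =
      PeriodMatching.ofPEquiv (m.pm (E.trunc (Nat.sub_le t 1))).toPEquiv F :=
  if_pos hF

theorem freeze_pm_of_not_follows (hF : ¬ Follows F E) : (m.freeze E).pm F = m.pm F :=
  if_neg hF

theorem sameOff_freeze (T : ℕ) : SameOff T m (m.freeze E) E :=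
  fun _ _ _ hF => freeze_pm_of_not_follows hF

theorem freeze_pm_eq_of_follows (hF : Follows F E) :
    ((m.freeze E).pm F).mA = (m.pm (E.trunc (Nat.sub_le t 1))).mA ∧
      ((m.freeze E).pm F).mB = (m.pm (E.trunc (Nat.sub_le t 1))).mB := by
  have hpairs : ∀ a b, (m.pm (E.trunc (Nat.sub_le t 1))).mA a = some b →
      a ∈ F.Abar n ∧ b ∈ F.Bbar n := fun a b hab => by
    have hmem := (m.pm _).memA a b hab
    rw [← hF.trunc_eq (Nat.sub_le t 1) ((Nat.sub_le t 1).trans hF.fst)] at hmem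
    exact ⟨F.Abar_trunc_subset _ hmem.1, F.Bbar_trunc_subset _ hmem.2⟩
  rw [freeze_pm_of_follows hF]
  exact ⟨PeriodMatching.ofPEquiv_mA hpairs, PeriodMatching.ofPEquiv_mB hpairs⟩

theorem availA_freeze : availA (m.freeze E) E = availA m E := by
  by_cases hF : Follows (E.trunc (Nat.sub_le t 1)) E
  · simp only [availA, (freeze_pm_eq_of_follows hF).1]
  · simp only [availA, freeze_pm_of_not_follows hF]

theorem availB_freeze : availB (m.freeze E) E = availB m E := by
  by_cases hF : Follows (E.trunc (Nat.sub_le t 1)) E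
  · simp only [availB, (freeze_pm_eq_of_follows hF).2]
  · simp only [availB, freeze_pm_of_not_follows hF]

end Freeze

/-- A conjecture in `M_T(m, E₁)`: the pairs of `g₁` in period 1, those of `g` afterwards. -/
noncomputable def Matching.conj (m : Matching A B) (E₁ : Realization A B 1) {g₁ g : A ≃. B}
    (hg : g₁ ≤ g) : Matching A B :=
  m.replaceAfter E₁ (fun n => if n ≤ 1 then g₁ else g)
    (fun n n' hnn' => by dsimp only; split_ifs <;> first | exact le_rfl | exact hg | omega)
    fun s hs hs1 a b hab => by
      obtain rfl : s = 0 := by omega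
      exact absurd ((m.pm _).memA a b hab).1 (Realization.notMem_Abar_zero _ a)

theorem mem_contReal_Abar_one (m : Matching A B) {t : ℕ} (F : Realization A B (t + 1))
    (a : A) :
    a ∈ (contReal m F t).Abar 1 ↔
      a ∈ F.Abar (t + 1) ∧ (m.pm (F.trunc t.le_succ)).mA a = none := by
  have harr : ∀ i : Fin (t + 1 - t), (i : ℕ) < 1 → (contReal m F t).arrA i =
      unmatchedA m (F.trunc t.le_succ) ∪ F.arrA (Fin.last t) := fun i hi =>
    if_pos (by omega)
  rw [Realization.mem_Abar, F.mem_Abar_succ]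
  constructor
  · rintro ⟨i, hi, ha⟩
    rw [harr i hi, unmatchedA, Finset.mem_union, Finset.mem_filter] at ha
    rcases ha with ha | ha
    · exact ⟨Or.inl ha.1, ha.2⟩
    · exact ⟨Or.inr ha, (m.pm _).mA_eq_none_of_notMem (F.notMem_Abar_of_mem_arrA_last ha)⟩
  · rintro ⟨ha, hnone⟩
    refine ⟨⟨0, by omega⟩, Nat.zero_lt_one, ?_⟩
    rw [harr _ Nat.zero_lt_one, unmatchedA, Finset.mem_union, Finset.mem_filter]
    exact ha.imp (fun h => ⟨h, hnone⟩) id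

theorem mem_contReal_Bbar_one (m : Matching A B) {t : ℕ} (F : Realization A B (t + 1))
    (b : B) :
    b ∈ (contReal m F t).Bbar 1 ↔
      b ∈ F.Bbar (t + 1) ∧ (m.pm (F.trunc t.le_succ)).mB b = none := by
  have harr : ∀ i : Fin (t + 1 - t), (i : ℕ) < 1 → (contReal m F t).arrB i =
      unmatchedB m (F.trunc t.le_succ) ∪ F.arrB (Fin.last t) := fun i hi =>
    if_pos (by omega)
  rw [Realization.mem_Bbar, F.mem_Bbar_succ]
  constructor
  · rintro ⟨i, hi, hb⟩
    rw [harr i hi, unmatchedB, Finset.mem_union, Finset.mem_filter] at hb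
    rcases hb with hb | hb
    · exact ⟨Or.inl hb.1, hb.2⟩
    · exact ⟨Or.inr hb, (m.pm _).mB_eq_none_of_notMem (F.notMem_Bbar_of_mem_arrB_last hb)⟩
  · rintro ⟨hb, hnone⟩
    refine ⟨⟨0, by omega⟩, Nat.zero_lt_one, ?_⟩
    rw [harr _ Nat.zero_lt_one, unmatchedB, Finset.mem_union, Finset.mem_filter]
    exact hb.imp (fun h => ⟨h, hnone⟩) id

def Economy.IsDirac {n : ℕ} (G : Economy A B n) (E : Realization A B n) : Prop :=
  ∀ F, G.prob F = if F = E then 1 else 0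

noncomputable def Economy.dirac {n : ℕ} (E : Realization A B n) : Economy A B n where
  prob F := if F = E then 1 else 0
  nonneg F := by split <;> norm_num
  finsupp := (Set.finite_singleton E).subset fun F hF => by
    by_contra hne
    exact hF (if_neg hne)
  total := by
    rw [finsum_eq_single _ E fun F hF => if_neg hF, if_pos rfl]

namespace Economy.IsDirac

variable {n t : ℕ} {G : Economy A B n} {E : Realization A B n} {E' : Realization A B t}

theorem of_pos_iff (hG : ∀ F, 0 < G.prob F ↔ F = E) : G.IsDirac E := by
  have hzero : ∀ F, F ≠ E → G.prob F = 0 := fun F hF =>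
    le_antisymm (not_lt.1 fun hc => hF ((hG F).1 hc)) (G.nonneg F)
  have hE : G.prob E = 1 := by
    simpa only [finsum_eq_single _ E hzero] using G.total
  intro F
  split_ifs with h
  · rw [h, hE]
  · exact hzero F h

theorem follows_of_inSupport (hG : G.IsDirac E) (h : InSupport G E') : Follows E E' := by
  obtain ⟨F, hF, hpos⟩ := h
  rw [hG F] at hpos
  split_ifs at hpos with hFE
  · exact hFE ▸ hF
  · exact absurd hpos (lt_irrefl 0)

theorem cond_eq (hG : G.IsDirac E) (hE : Follows E E') (F : Realization A B n) :
    cond G E' F = if F = E then 1 else 0 := by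
  have hmass : condMass G E' = 1 := by
    rw [condMass, finsum_eq_single _ E fun F hF => by simp [hG F, hF], finsum_eq_if,
      if_pos hE, hG E, if_pos rfl]
  rw [cond, hmass, hG F, div_one]
  split_ifs with h1 h2 h2 <;> first | rfl | exact absurd (h2 ▸ hE) h1

theorem contEconomy (hG : G.IsDirac E) (hE : Follows E E') (m : Matching A B) :
    (contEconomy G m E').IsDirac (contReal m E t) := by
  have hpush : contPush G m E' = (Economy.dirac (contReal m E t)).prob := by
    funext F'
    rw [contPush, finsum_eq_single _ E fun F hF => by simp [hG.cond_eq hE, hF], finsum_eq_if,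
      hG.cond_eq hE, if_pos rfl]
    simp only [Economy.dirac, hE, true_and, eq_comm]
  have hex : ∃ Ec : Economy A B (n - t), Ec.prob = contPush G m E' := ⟨_, hpush.symm⟩
  intro F'
  rw [DynMatch.contEconomy, dif_pos hex, hex.choose_spec, hpush]
  rfl

end Economy.IsDirac

section FirstTime

variable {n t : ℕ} {P : ∀ s, s ≤ n → Prop}

theorem sInf_firstTime_le : sInf ({s | t ≤ s ∧ ∃ h : s ≤ n, P s h} ∪ {n}) ≤ n :=
  Nat.sInf_le (Or.inr rfl)

theorem sInf_firstTime_eq_of (h : t ≤ n) (hP : P t h) :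
    sInf ({s | t ≤ s ∧ ∃ h : s ≤ n, P s h} ∪ {n}) = t := by
  refine le_antisymm (Nat.sInf_le (Or.inl ⟨le_rfl, h, hP⟩)) (le_csInf ⟨n, Or.inr rfl⟩ ?_)
  rintro s (⟨hs, -⟩ | rfl)
  exacts [hs, h]

theorem sInf_firstTime_eq_of_not {P : ∀ s, s ≤ t + 1 → Prop} (hP : ¬ P t t.le_succ) :
    sInf ({s | t ≤ s ∧ ∃ h : s ≤ t + 1, P s h} ∪ {t + 1}) = t + 1 := by
  refine le_antisymm sInf_firstTime_le (le_csInf ⟨t + 1, Or.inr rfl⟩ ?_)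
  rintro s (⟨hs, hs', hPs⟩ | rfl)
  · rcases hs.eq_or_lt with rfl | hlt
    exacts [absurd hPs hP, hlt]
  · exact le_rfl

end FirstTime

section Payoff

variable {M : Market A B} {n t : ℕ} {G : Economy A B n} {m : Matching A B} {a : A} {b : B}

theorem Upay_of_isDirac {E : Realization A B n} {E' : Realization A B t} (hG : G.IsDirac E)
    (hE : Follows E E') :
    Upay M G m a E' = M.dA a ^ (matchTimeA m E a t - t) * ((m.pm E).mA a).elim 0 (M.u a) := by
  rw [Upay, finsum_eq_single _ E fun F hF => by simp [hG.cond_eq hE, hF], hG.cond_eq hE,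
    if_pos rfl, one_mul]

theorem Vpay_of_isDirac {E : Realization A B n} {E' : Realization A B t} (hG : G.IsDirac E)
    (hE : Follows E E') :
    Vpay M G m b E' =
      M.dB b ^ (matchTimeB m E b t - t) * ((m.pm E).mB b).elim 0 (fun a => M.v a b) := by
  rw [Vpay, finsum_eq_single _ E fun F hF => by simp [hG.cond_eq hE, hF], hG.cond_eq hE,
    if_pos rfl, one_mul]

theorem Upay_self {E : Realization A B n} (hG : G.IsDirac E) :
    Upay M G m a E = ((m.pm E).mA a).elim 0 (M.u a) := by
  rw [Upay_of_isDirac hG (follows_refl E), matchTimeA, Nat.sub_eq_zero_of_le sInf_firstTime_le,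
    pow_zero, one_mul]

theorem Vpay_self {E : Realization A B n} (hG : G.IsDirac E) :
    Vpay M G m b E = ((m.pm E).mB b).elim 0 (fun a => M.v a b) := by
  rw [Vpay_of_isDirac hG (follows_refl E), matchTimeB, Nat.sub_eq_zero_of_le sInf_firstTime_le,
    pow_zero, one_mul]

theorem Upay_trunc_of_eq_some {E : Realization A B n} (hG : G.IsDirac E) (h : t ≤ n)
    (hab : (m.pm (E.trunc h)).mA a = some b) : Upay M G m a (E.trunc h) = M.u a b := by
  rw [Upay_of_isDirac hG (follows_trunc E h), matchTimeA,
    sInf_firstTime_eq_of h (by rw [hab]; rfl), Nat.sub_self, pow_zero, one_mul,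
    m.irrevA h E a b hab, Option.elim_some]

theorem Vpay_trunc_of_eq_some {E : Realization A B n} (hG : G.IsDirac E) (h : t ≤ n)
    (hab : (m.pm (E.trunc h)).mB b = some a) : Vpay M G m b (E.trunc h) = M.v a b := by
  rw [Vpay_of_isDirac hG (follows_trunc E h), matchTimeB,
    sInf_firstTime_eq_of h (by rw [hab]; rfl), Nat.sub_self, pow_zero, one_mul,
    m.irrevB h E hab, Option.elim_some]

theorem Upay_trunc_of_eq_none {G : Economy A B (t + 1)} {E : Realization A B (t + 1)}
    (hG : G.IsDirac E) (ha : (m.pm (E.trunc t.le_succ)).mA a = none) :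
    Upay M G m a (E.trunc t.le_succ) = M.dA a * ((m.pm E).mA a).elim 0 (M.u a) := by
  rw [Upay_of_isDirac hG (follows_trunc E _), matchTimeA,
    sInf_firstTime_eq_of_not (by rw [ha]; exact Bool.false_ne_true), Nat.add_sub_cancel_left,
    pow_one]

theorem Vpay_trunc_of_eq_none {G : Economy A B (t + 1)} {E : Realization A B (t + 1)}
    (hG : G.IsDirac E) (hb : (m.pm (E.trunc t.le_succ)).mB b = none) :
    Vpay M G m b (E.trunc t.le_succ) = M.dB b * ((m.pm E).mB b).elim 0 (fun a => M.v a b) := by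
  rw [Vpay_of_isDirac hG (follows_trunc E _), matchTimeB,
    sInf_firstTime_eq_of_not (by rw [hb]; exact Bool.false_ne_true), Nat.add_sub_cancel_left,
    pow_one]

end Payoff

theorem IsStaticStable.congr {M : Market A B} {P : Finset A} {Q : Finset B}
    {f mA : A → Option B} {f' mB : B → Option A} (h : IsStaticStable M P Q f f')
    (hA : ∀ a ∈ P, mA a = f a) (hB : ∀ b ∈ Q, mB b = f' b) :
    IsStaticStable M P Q mA mB := by
  obtain ⟨hIRA, hIRB, hNB⟩ := h
  refine ⟨fun a ha => hA a ha ▸ hIRA a ha, fun b hb => hB b hb ▸ hIRB b hb, ?_⟩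
  rintro ⟨a, ha, b, hb, hu, hv⟩
  rw [hA a ha] at hu
  rw [hB b hb] at hv
  exact hNB ⟨a, ha, b, hb, hu, hv⟩

/-- Conditions (DS2), (DS3) and (DS1) of dynamic stability at the node `E`. -/
def StableAt (M : Market A B) {T : ℕ} (G : Economy A B T) (m : Matching A B) {t : ℕ}
    (E : Realization A B t) : Prop :=
  (∀ a ∈ availA m E, ∃ mbar ∈ ConjA M G E m a (DynStable M (T - t)),
      Upay M G mbar a E ≤ Upay M G m a E) ∧
  (∀ b ∈ availB m E, ∃ mbar ∈ ConjB M G E m b (DynStable M (T - t)),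
      Vpay M G mbar b E ≤ Vpay M G m b E) ∧
  ¬ ∃ a ∈ availA m E, ∃ b ∈ availB m E,
      Upay M G m a E < M.u a b ∧ Vpay M G m b E < M.v a b

section DynStable

variable {M : Market A B} {T : ℕ} {G : Economy A B T} {m : Matching A B}

theorem mem_dynStable_iff :
    m ∈ DynStable M T G ↔ ∀ t, 1 ≤ t → t ≤ T →
      ∀ E : Realization A B t, InSupport G E → StableAt M G m E := by
  rw [DynStable]
  rfl

theorem mem_dynStable_of_eq_zero (hT : T = 0) : m ∈ DynStable M T G :=
  mem_dynStable_iff.2 fun _ h1 h2 => by omega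

theorem mem_dynStable_of_isDirac {E : Realization A B T} (hG : G.IsDirac E)
    (h : ∀ t (ht : t ≤ T), 1 ≤ t → StableAt M G m (E.trunc ht)) : m ∈ DynStable M T G :=
  mem_dynStable_iff.2 fun t h1 _ _ hE' => by
    obtain ⟨ht, rfl⟩ := hG.follows_of_inSupport hE'
    exact h t ht h1

theorem stableAt_self {E : Realization A B T} (hG : G.IsDirac E)
    (h : IsStaticStable M (availA m E) (availB m E) (m.pm E).mA (m.pm E).mB) :
    StableAt M G m E := by
  obtain ⟨hIRA, hIRB, hNB⟩ := h
  have hfA : ∀ a ∈ availA m E, ((m.freeze E).pm E).mA a = none := fun a ha => by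
    rw [(freeze_pm_eq_of_follows (follows_refl E)).1]
    exact (Finset.mem_filter.1 ha).2
  have hfB : ∀ b ∈ availB m E, ((m.freeze E).pm E).mB b = none := fun b hb => by
    rw [(freeze_pm_eq_of_follows (follows_refl E)).2]
    exact (Finset.mem_filter.1 hb).2
  have hstab : StableAmongMatched M (m.freeze E) E := by
    rw [StableAmongMatched, availA_freeze, availB_freeze]
    refine ⟨fun a ha b hab => by simp [hfA a ha] at hab, fun b hb a hab => by
      simp [hfB b hb] at hab, ?_⟩
    rintro ⟨a, ha, -, -, hsome, -⟩
    simp [hfA a ha] at hsome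
  have hcont : ∃ m' ∈ DynStable M (T - T) (contEconomy G (m.freeze E) E),
      ContAgrees T (m.freeze E) m' E :=
    ⟨m, mem_dynStable_of_eq_zero (Nat.sub_self T), fun s hs hsT => by omega⟩
  refine ⟨fun a ha => ⟨m.freeze E, ⟨sameOff_freeze T, hfA a ha, hstab, hcont⟩, ?_⟩,
    fun b hb => ⟨m.freeze E, ⟨sameOff_freeze T, hfB b hb, hstab, hcont⟩, ?_⟩, ?_⟩
  · rw [Upay_self hG, Upay_self hG, hfA a ha]
    exact hIRA a ha
  · rw [Vpay_self hG, Vpay_self hG, hfB b hb]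
    exact hIRB b hb
  · rintro ⟨a, ha, b, hb, hu, hv⟩
    rw [Upay_self hG] at hu
    rw [Vpay_self hG] at hv
    exact hNB ⟨a, ha, b, hb, hu, hv⟩

theorem mem_dynStable_one {G : Economy A B 1} {E : Realization A B 1} (hG : G.IsDirac E)
    (h : IsStaticStable M (E.Abar 1) (E.Bbar 1) (m.pm E).mA (m.pm E).mB) :
    m ∈ DynStable M 1 G := by
  have hA : availA m E = E.Abar 1 := Finset.filter_true_of_mem fun a _ =>
    (m.pm _).mA_eq_none_of_notMem (Realization.notMem_Abar_zero _ a)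
  have hB : availB m E = E.Bbar 1 := Finset.filter_true_of_mem fun b _ =>
    (m.pm _).mB_eq_none_of_notMem (Realization.notMem_Bbar_zero _ b)
  refine mem_dynStable_of_isDirac hG fun t ht h1 => ?_
  obtain rfl : t = 1 := le_antisymm ht h1
  rw [E.trunc_self]
  exact stableAt_self hG (by rwa [hA, hB])

end DynStable

section Conj

variable {m : Matching A B} {E₁ : Realization A B 1} {g₁ g : A ≃. B} {hg : g₁ ≤ g}

theorem conj_pm_self : (m.conj E₁ hg).pm E₁ = PeriodMatching.ofPEquiv g₁ E₁ := by
  show (if Follows E₁ E₁ then PeriodMatching.ofPEquiv (if 1 ≤ 1 then g₁ else g) E₁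
    else m.pm E₁) = _
  rw [if_pos (follows_refl E₁), if_pos le_rfl]

theorem conj_pm_of_follows {F : Realization A B 2} (hF : Follows F E₁) :
    (m.conj E₁ hg).pm F = PeriodMatching.ofPEquiv g F := by
  show (if Follows F E₁ then PeriodMatching.ofPEquiv (if 2 ≤ 1 then g₁ else g) F
    else m.pm F) = _
  rw [if_pos hF, if_neg (by omega)]

theorem sameOff_conj (T : ℕ) : SameOff T m (m.conj E₁ hg) E₁ :=
  fun _ _ _ hF => if_neg hF

end Conj

/-- After a deviation at the first node of `E`, the pairs of `g₁` form in period 1 and `g` is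
the matching at the end of period 2. -/
structure IsConjecture (M : Market A B) (E : Realization A B 2) (g₁ g : A ≃. B) : Prop where
  le : g₁ ≤ g
  mem_first : ∀ a b, g₁ a = some b →
    a ∈ (E.trunc one_le_two).Abar 1 ∧ b ∈ (E.trunc one_le_two).Bbar 1
  mem_second : ∀ a b, g a = some b → a ∈ E.Abar 2 ∧ b ∈ E.Bbar 2
  ir : ∀ a b, g a = some b → 0 ≤ M.u a b ∧ 0 ≤ M.v a b
  noBlock_first : ∀ a b a' b', g₁ a = some b' → g₁.symm b = some a' →
    ¬ (M.u a b' < M.u a b ∧ M.v a' b < M.v a b)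
  noBlock_second : ∀ a ∈ E.Abar 2, ∀ b ∈ E.Bbar 2, g₁ a = none → g₁.symm b = none →
    ¬ ((g a).elim 0 (M.u a) < M.u a b ∧ (g.symm b).elim 0 (fun a' => M.v a' b) < M.v a b)

namespace IsConjecture

section Construction

variable {M : Market A B} {E : Realization A B 2} {g : A ≃. B}

theorem of_single [DecidableEq A] [DecidableEq B] {a₁ : A} {b₁ : B}
    (ha₁ : a₁ ∈ (E.trunc one_le_two).Abar 1) (hb₁ : b₁ ∈ (E.trunc one_le_two).Bbar 1)
    (hg : g a₁ = some b₁)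
    (mem_second : ∀ a b, g a = some b → a ∈ E.Abar 2 ∧ b ∈ E.Bbar 2)
    (ir : ∀ a b, g a = some b → 0 ≤ M.u a b ∧ 0 ≤ M.v a b)
    (noBlock_second : ∀ a ∈ E.Abar 2, ∀ b ∈ E.Bbar 2, a ≠ a₁ → b ≠ b₁ →
      ¬ ((g a).elim 0 (M.u a) < M.u a b ∧ (g.symm b).elim 0 (fun a' => M.v a' b) < M.v a b)) :
    IsConjecture M E (PEquiv.single a₁ b₁) g where
  le a b h := by
    obtain ⟨rfl, rfl⟩ := (PEquiv.mem_single_iff _ _ _ _).1 h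
    exact hg
  mem_first a b h := by
    obtain ⟨rfl, rfl⟩ := (PEquiv.mem_single_iff _ _ _ _).1 h
    exact ⟨ha₁, hb₁⟩
  mem_second := mem_second
  ir := ir
  noBlock_first a b a' b' h h' hblock := by
    rw [PEquiv.symm_single] at h'
    obtain ⟨rfl, rfl⟩ := (PEquiv.mem_single_iff _ _ _ _).1 h
    obtain ⟨rfl, -⟩ := (PEquiv.mem_single_iff _ _ _ _).1 h'
    exact lt_irrefl _ hblock.1
  noBlock_second a ha b hb ha₁ hb₁ :=
    noBlock_second a ha b hb (fun h => by simp [h] at ha₁) (fun h => by simp [h] at hb₁)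

theorem of_bot (mem_second : ∀ a b, g a = some b → a ∈ E.Abar 2 ∧ b ∈ E.Bbar 2)
    (ir : ∀ a b, g a = some b → 0 ≤ M.u a b ∧ 0 ≤ M.v a b)
    (noBlock_second : ∀ a ∈ E.Abar 2, ∀ b ∈ E.Bbar 2,
      ¬ ((g a).elim 0 (M.u a) < M.u a b ∧ (g.symm b).elim 0 (fun a' => M.v a' b) < M.v a b)) :
    IsConjecture M E ⊥ g where
  le := bot_le
  mem_first a b h := by simp [PEquiv.bot_apply] at h
  mem_second := mem_second
  ir := ir
  noBlock_first a b a' b' h := by simp [PEquiv.bot_apply] at h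
  noBlock_second a ha b hb _ _ := noBlock_second a ha b hb

end Construction

variable {M : Market A B} {E : Realization A B 2} {g₁ g : A ≃. B} (hc : IsConjecture M E g₁ g)
  (m : Matching A B)
include hc

theorem conj_pm_self :
    ((m.conj (E.trunc one_le_two) hc.le).pm (E.trunc one_le_two)).mA = g₁ ∧
      ((m.conj (E.trunc one_le_two) hc.le).pm (E.trunc one_le_two)).mB = g₁.symm := by
  rw [DynMatch.conj_pm_self]
  exact ⟨PeriodMatching.ofPEquiv_mA hc.mem_first, PeriodMatching.ofPEquiv_mB hc.mem_first⟩

theorem conj_pm_two :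
    ((m.conj (E.trunc one_le_two) hc.le).pm E).mA = g ∧
      ((m.conj (E.trunc one_le_two) hc.le).pm E).mB = g.symm := by
  rw [conj_pm_of_follows (follows_trunc E one_le_two)]
  exact ⟨PeriodMatching.ofPEquiv_mA hc.mem_second, PeriodMatching.ofPEquiv_mB hc.mem_second⟩

theorem stableAmongMatched :
    StableAmongMatched M (m.conj (E.trunc one_le_two) hc.le) (E.trunc one_le_two) := by
  obtain ⟨hA, hB⟩ := hc.conj_pm_self m
  refine ⟨fun a _ b hab => (hc.ir a b (hc.le a b (hA ▸ hab))).1,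
    fun b _ a hab => (hc.ir a b (hc.le a b (g₁.eq_some_iff.1 (hB ▸ hab)))).2, ?_⟩
  rintro ⟨a, -, b, -, ha, hb, hu, hv⟩
  rw [hA] at ha hu
  rw [hB] at hb hv
  obtain ⟨b', hb'⟩ := Option.isSome_iff_exists.1 ha
  obtain ⟨a', ha'⟩ := Option.isSome_iff_exists.1 hb
  rw [hb', Option.elim_some] at hu
  rw [ha', Option.elim_some] at hv
  exact hc.noBlock_first a b a' b' hb' ha' ⟨hu, hv⟩

theorem isStaticStable_second :
    IsStaticStable M ((E.Abar 2).filter (g₁ · = none)) ((E.Bbar 2).filter (g₁.symm · = none))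
      g g.symm := by
  refine ⟨fun a _ => ?_, fun b _ => ?_, ?_⟩
  · cases hab : g a with
    | none => exact le_rfl
    | some b => exact (hc.ir a b hab).1
  · cases hab : g.symm b with
    | none => exact le_rfl
    | some a => exact (hc.ir a b (g.eq_some_iff.1 hab)).2
  · rintro ⟨a, ha, b, hb, hblock⟩
    rw [Finset.mem_filter] at ha hb
    exact hc.noBlock_second a ha.1 b hb.1 ha.2 hb.2 hblock

theorem mem_contReal_Abar {F : Realization A B 2} (hF : Follows F (E.trunc one_le_two))
    (a : A) :
    a ∈ (contReal (m.conj (E.trunc one_le_two) hc.le) F 1).Abar 1 ↔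
      a ∈ F.Abar 2 ∧ g₁ a = none := by
  rw [mem_contReal_Abar_one, hF.snd, (hc.conj_pm_self m).1]

theorem mem_contReal_Bbar {F : Realization A B 2} (hF : Follows F (E.trunc one_le_two))
    (b : B) :
    b ∈ (contReal (m.conj (E.trunc one_le_two) hc.le) F 1).Bbar 1 ↔
      b ∈ F.Bbar 2 ∧ g₁.symm b = none := by
  rw [mem_contReal_Bbar_one, hF.snd, (hc.conj_pm_self m).2]

theorem contAgrees :
    ContAgrees 2 (m.conj (E.trunc one_le_two) hc.le) (Matching.ofPEquiv g)
      (E.trunc one_le_two) := by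
  intro s hs hs2 F hF
  obtain rfl : s = 1 := by omega
  obtain ⟨hA, hB⟩ := hc.conj_pm_self m
  refine ⟨fun a ha => ?_, fun b hb => ?_⟩
  · rw [hA] at ha
    rw [conj_pm_of_follows hF]
    exact PEquiv.restrict_apply_congr fun b hab =>
      ⟨(hc.mem_contReal_Abar m hF a).trans (and_iff_left ha),
        (hc.mem_contReal_Bbar m hF b).trans
          (and_iff_left (PEquiv.symm_eq_none_of_le hc.le ha hab))⟩
  · rw [hB] at hb
    rw [conj_pm_of_follows hF]
    show (PeriodMatching.ofPEquiv g _).mB b = (PeriodMatching.ofPEquiv g F).mB b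
    simp only [PeriodMatching.ofPEquiv, PEquiv.symm_restrict]
    exact PEquiv.restrict_apply_congr fun a hab =>
      ⟨(hc.mem_contReal_Bbar m hF b).trans (and_iff_left hb),
        (hc.mem_contReal_Abar m hF a).trans (and_iff_left (by
          simpa using PEquiv.symm_eq_none_of_le (PEquiv.symm_le_symm hc.le) hb hab))⟩

theorem ofPEquiv_mem_dynStable {G : Economy A B 2} (hG : G.IsDirac E) :
    Matching.ofPEquiv g ∈
      DynStable M (2 - 1)
        (contEconomy G (m.conj (E.trunc one_le_two) hc.le) (E.trunc one_le_two)) := by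
  have hE := follows_trunc E one_le_two
  have hpoolA : (contReal (m.conj _ hc.le) E 1).Abar 1 = (E.Abar 2).filter (g₁ · = none) :=
    Finset.ext fun a => by rw [Finset.mem_filter]; exact hc.mem_contReal_Abar m hE a
  have hpoolB : (contReal (m.conj _ hc.le) E 1).Bbar 1 = (E.Bbar 2).filter (g₁.symm · = none) :=
    Finset.ext fun b => by rw [Finset.mem_filter]; exact hc.mem_contReal_Bbar m hE b
  refine mem_dynStable_one (hG.contEconomy hE _) ?_
  rw [hpoolA, hpoolB]
  refine hc.isStaticStable_second.congr (fun a ha => ?_) (fun b hb => ?_)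
  · rw [Finset.mem_filter] at ha
    refine PEquiv.restrict_apply_of_mem (by rwa [Finset.mem_coe, hpoolA, Finset.mem_filter])
      fun b hab => ?_
    rw [Finset.mem_coe, hpoolB, Finset.mem_filter]
    exact ⟨(hc.mem_second a b hab).2, PEquiv.symm_eq_none_of_le hc.le ha.2 hab⟩
  · rw [Finset.mem_filter] at hb
    show (g.restrict _ _).symm b = _
    rw [PEquiv.symm_restrict]
    refine PEquiv.restrict_apply_of_mem (by rwa [Finset.mem_coe, hpoolB, Finset.mem_filter])
      fun a hab => ?_
    rw [Finset.mem_coe, hpoolA, Finset.mem_filter]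
    refine ⟨(hc.mem_second a b (g.eq_some_iff.1 hab)).1, ?_⟩
    simpa using PEquiv.symm_eq_none_of_le (PEquiv.symm_le_symm hc.le) hb.2 hab

variable {G : Economy A B 2} (hG : G.IsDirac E)
include hG

theorem conj_mem_conjA {a : A} (ha : g₁ a = none) :
    m.conj (E.trunc one_le_two) hc.le ∈
      ConjA M G (E.trunc one_le_two) m a (DynStable M (2 - 1)) :=
  ⟨sameOff_conj 2, (hc.conj_pm_self m).1 ▸ ha, hc.stableAmongMatched m,
    _, hc.ofPEquiv_mem_dynStable m hG, hc.contAgrees m⟩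

theorem conj_mem_conjB {b : B} (hb : g₁.symm b = none) :
    m.conj (E.trunc one_le_two) hc.le ∈
      ConjB M G (E.trunc one_le_two) m b (DynStable M (2 - 1)) :=
  ⟨sameOff_conj 2, (hc.conj_pm_self m).2 ▸ hb, hc.stableAmongMatched m,
    _, hc.ofPEquiv_mem_dynStable m hG, hc.contAgrees m⟩

theorem Upay_conj {a : A} (ha : g₁ a = none) :
    Upay M G (m.conj (E.trunc one_le_two) hc.le) a (E.trunc one_le_two) =
      M.dA a * (g a).elim 0 (M.u a) := by
  rw [Upay_trunc_of_eq_none hG ((hc.conj_pm_self m).1 ▸ ha), (hc.conj_pm_two m).1]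

theorem Vpay_conj {b : B} (hb : g₁.symm b = none) :
    Vpay M G (m.conj (E.trunc one_le_two) hc.le) b (E.trunc one_le_two) =
      M.dB b * (g.symm b).elim 0 (fun a => M.v a b) := by
  rw [Vpay_trunc_of_eq_none hG ((hc.conj_pm_self m).2 ▸ hb), (hc.conj_pm_two m).2]

end IsConjecture

section TwoPeriods

variable {M : Market A B} {E : Realization A B 2} {G : Economy A B 2} {m : Matching A B}

theorem stableAt_first (hG : G.IsDirac E)
    (hA : ∀ a ∈ (E.trunc one_le_two).Abar 1, ∃ g₁ g, IsConjecture M E g₁ g ∧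
      g₁ a = none ∧ M.dA a * (g a).elim 0 (M.u a) ≤ Upay M G m a (E.trunc one_le_two))
    (hB : ∀ b ∈ (E.trunc one_le_two).Bbar 1, ∃ g₁ g, IsConjecture M E g₁ g ∧
      g₁.symm b = none ∧
        M.dB b * (g.symm b).elim 0 (fun a => M.v a b) ≤ Vpay M G m b (E.trunc one_le_two))
    (hNB : ∀ a ∈ (E.trunc one_le_two).Abar 1, ∀ b ∈ (E.trunc one_le_two).Bbar 1,
      ¬ (Upay M G m a (E.trunc one_le_two) < M.u a b ∧
        Vpay M G m b (E.trunc one_le_two) < M.v a b)) :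
    StableAt M G m (E.trunc one_le_two) := by
  refine ⟨fun a ha => ?_, fun b hb => ?_, ?_⟩
  · obtain ⟨g₁, g, hc, ha₁, hpay⟩ := hA a (Finset.mem_filter.1 ha).1
    exact ⟨_, hc.conj_mem_conjA m hG ha₁, (hc.Upay_conj m hG ha₁).trans_le hpay⟩
  · obtain ⟨g₁, g, hc, hb₁, hpay⟩ := hB b (Finset.mem_filter.1 hb).1
    exact ⟨_, hc.conj_mem_conjB m hG hb₁, (hc.Vpay_conj m hG hb₁).trans_le hpay⟩
  · rintro ⟨a, ha, b, hb, hblock⟩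
    exact hNB a (Finset.mem_filter.1 ha).1 b (Finset.mem_filter.1 hb).1 hblock

theorem mem_dynStable_two (hG : G.IsDirac E) (h₁ : StableAt M G m (E.trunc one_le_two))
    (h₂ : IsStaticStable M (availA m E) (availB m E) (m.pm E).mA (m.pm E).mB) :
    m ∈ DynStable M 2 G := by
  refine mem_dynStable_of_isDirac hG fun t ht h1 => ?_
  interval_cases t
  · exact h₁
  · rw [E.trunc_self]
    exact stableAt_self hG h₂

end TwoPeriods

section Example

variable [DecidableEq A] [DecidableEq B]

structure LoneWolfExample (M : Market A B) (E : Realization A B 2) (a11 a12 a21 a22 : A)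
    (b11 b21 b22 : B) : Prop where
  hA1 : a11 ≠ a12
  hA2 : a11 ≠ a21
  hA3 : a11 ≠ a22
  hA4 : a12 ≠ a21
  hA5 : a12 ≠ a22
  hA6 : a21 ≠ a22
  hB1 : b11 ≠ b21
  hB2 : b11 ≠ b22
  hB3 : b21 ≠ b22
  harrA0 : E.arrA 0 = {a11, a12}
  harrA1 : E.arrA 1 = {a21, a22}
  harrB0 : E.arrB 0 = {b11}
  harrB1 : E.arrB 1 = {b21, b22}
  h11_1 : M.u a11 b22 < M.dA a11 * M.u a11 b21
  h11_2 : M.u a11 b11 < M.u a11 b22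
  h11_3 : M.dA a11 * M.u a11 b22 < M.u a11 b11
  h11_4 : 0 < M.dA a11 * M.u a11 b22
  h12_1 : 0 < M.u a12 b11
  h12_2 : M.u a12 b21 < 0
  h12_3 : M.u a12 b22 < 0
  h21_1 : 0 < M.u a21 b21
  h21_2 : M.u a21 b11 < 0
  h21_3 : M.u a21 b22 < 0
  h22_1 : M.u a22 b21 < M.u a22 b22
  h22_2 : 0 < M.u a22 b21
  h22_3 : M.u a22 b11 < 0
  hb11_1 : M.v a12 b11 < M.v a11 b11
  hb11_2 : 0 < M.v a12 b11
  hb21_1 : M.v a11 b21 < M.v a22 b21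
  hb21_2 : M.v a21 b21 < M.v a11 b21
  hb21_3 : 0 < M.v a21 b21
  hb22_1 : M.v a22 b22 < M.v a11 b22
  hb22_2 : 0 < M.v a22 b22

namespace LoneWolfExample

variable {M : Market A B} {E : Realization A B 2} {a11 a12 a21 a22 : A} {b11 b21 b22 : B}
  (X : LoneWolfExample M E a11 a12 a21 a22 b11 b21 b22)
include X

theorem distinct :
    a11 ≠ a12 ∧ a11 ≠ a21 ∧ a11 ≠ a22 ∧ a12 ≠ a21 ∧ a12 ≠ a22 ∧ a21 ≠ a22 ∧
      a12 ≠ a11 ∧ a21 ≠ a11 ∧ a22 ≠ a11 ∧ a21 ≠ a12 ∧ a22 ≠ a12 ∧ a22 ≠ a21 ∧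
      b11 ≠ b21 ∧ b11 ≠ b22 ∧ b21 ≠ b22 ∧ b21 ≠ b11 ∧ b22 ≠ b11 ∧ b22 ≠ b21 :=
  ⟨X.hA1, X.hA2, X.hA3, X.hA4, X.hA5, X.hA6, X.hA1.symm, X.hA2.symm, X.hA3.symm, X.hA4.symm,
    X.hA5.symm, X.hA6.symm, X.hB1, X.hB2, X.hB3, X.hB1.symm, X.hB2.symm, X.hB3.symm⟩

theorem mem_Abar_first (x : A) : x ∈ (E.trunc one_le_two).Abar 1 ↔ x = a11 ∨ x = a12 := by
  rw [Realization.mem_Abar_succ, or_iff_right (Realization.notMem_Abar_zero _ x)]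
  show x ∈ E.arrA 0 ↔ _
  rw [X.harrA0, Finset.mem_insert, Finset.mem_singleton]

theorem mem_Abar_second (x : A) :
    x ∈ E.Abar 2 ↔ x = a11 ∨ x = a12 ∨ x = a21 ∨ x = a22 := by
  rw [Realization.mem_Abar_succ, X.mem_Abar_first, or_assoc]
  show _ ∨ _ ∨ x ∈ E.arrA 1 ↔ _
  rw [X.harrA1, Finset.mem_insert, Finset.mem_singleton]

theorem mem_Bbar_first (y : B) : y ∈ (E.trunc one_le_two).Bbar 1 ↔ y = b11 := by
  rw [Realization.mem_Bbar_succ, or_iff_right (Realization.notMem_Bbar_zero _ y)]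
  show y ∈ E.arrB 0 ↔ _
  rw [X.harrB0, Finset.mem_singleton]

theorem mem_Bbar_second (y : B) : y ∈ E.Bbar 2 ↔ y = b11 ∨ y = b21 ∨ y = b22 := by
  rw [Realization.mem_Bbar_succ, X.mem_Bbar_first]
  show _ ∨ y ∈ E.arrB 1 ↔ _
  rw [X.harrB1, Finset.mem_insert, Finset.mem_singleton]

theorem u_a11_b22_pos : 0 < M.u a11 b22 :=
  pos_of_mul_pos_right X.h11_4 (M.dA_nonneg a11)

theorem u_a11_b21_pos : 0 < M.u a11 b21 :=
  pos_of_mul_pos_right (X.u_a11_b22_pos.trans X.h11_1) (M.dA_nonneg a11)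

theorem u_a11_b22_lt_u_a11_b21 : M.u a11 b22 < M.u a11 b21 :=
  X.h11_1.trans_le (mul_le_of_le_one_left X.u_a11_b21_pos.le (M.dA_lt_one a11).le)

theorem dB_mul_v_a12_b11_le : M.dB b11 * M.v a12 b11 ≤ M.v a12 b11 :=
  mul_le_of_le_one_left X.hb11_2.le (M.dB_lt_one b11).le

theorem isConjecture_a11_wait_L :
    IsConjecture M E (PEquiv.single a12 b11)
      (((PEquiv.single a12 b11).update a11 b22).update a22 b21) := by
  have hd := X.distinct
  refine .of_single ((X.mem_Abar_first _).2 (Or.inr rfl)) ((X.mem_Bbar_first _).2 rfl)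
    (by simp [PEquiv.update_apply, hd]) (fun a b h => ?_) (fun a b h => ?_) ?_
  · rcases PEquiv.eq_some_of_update_update_single h with ⟨rfl, rfl⟩ | ⟨rfl, rfl⟩ | ⟨rfl, rfl⟩
      <;> simp [X.mem_Abar_second, X.mem_Bbar_second]
  · rcases PEquiv.eq_some_of_update_update_single h with ⟨rfl, rfl⟩ | ⟨rfl, rfl⟩ | ⟨rfl, rfl⟩
      <;> constructor
      <;> linarith [X.h12_1, X.h22_2, X.u_a11_b22_pos, X.hb11_2, X.hb21_1, X.hb21_2, X.hb21_3,
        X.hb22_1, X.hb22_2]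
  · intro a ha b hb ha₁ hb₁
    rw [X.mem_Abar_second] at ha
    rw [X.mem_Bbar_second] at hb
    rcases ha with rfl | rfl | rfl | rfl <;> rcases hb with rfl | rfl | rfl
      <;> simp [PEquiv.update_apply, PEquiv.symm_update, PEquiv.single_apply_of_ne, hd]
        at ha₁ hb₁ ⊢
      <;> intro
      <;> linarith [X.h21_3, X.hb21_1, X.hb21_2, X.hb22_1]

theorem isConjecture_b11_wait :
    IsConjecture M E ⊥ (((PEquiv.single a12 b11).update a11 b22).update a22 b21) := by
  have hd := X.distinct
  refine .of_bot X.isConjecture_a11_wait_L.mem_second X.isConjecture_a11_wait_L.ir ?_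
  intro a ha b hb
  rw [X.mem_Abar_second] at ha
  rw [X.mem_Bbar_second] at hb
  rcases ha with rfl | rfl | rfl | rfl <;> rcases hb with rfl | rfl | rfl
    <;> simp [PEquiv.update_apply, PEquiv.symm_update, PEquiv.single_apply_of_ne, hd]
    <;> intro
    <;> linarith [X.h11_2, X.h12_1, X.h12_2, X.h12_3, X.h21_2, X.h21_3, X.h22_2, X.h22_3,
      X.hb21_1, X.hb21_2, X.hb22_1]

theorem isConjecture_a11_wait_R :
    IsConjecture M E (PEquiv.single a12 b11)
      (((PEquiv.single a12 b11).update a11 b21).update a22 b22) := by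
  have hd := X.distinct
  refine .of_single ((X.mem_Abar_first _).2 (Or.inr rfl)) ((X.mem_Bbar_first _).2 rfl)
    (by simp [PEquiv.update_apply, hd]) (fun a b h => ?_) (fun a b h => ?_) ?_
  · rcases PEquiv.eq_some_of_update_update_single h with ⟨rfl, rfl⟩ | ⟨rfl, rfl⟩ | ⟨rfl, rfl⟩
      <;> simp [X.mem_Abar_second, X.mem_Bbar_second]
  · rcases PEquiv.eq_some_of_update_update_single h with ⟨rfl, rfl⟩ | ⟨rfl, rfl⟩ | ⟨rfl, rfl⟩
      <;> constructor
      <;> linarith [X.h12_1, X.h22_1, X.h22_2, X.u_a11_b21_pos, X.hb11_2, X.hb21_2, X.hb21_3,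
        X.hb22_2]
  · intro a ha b hb ha₁ hb₁
    rw [X.mem_Abar_second] at ha
    rw [X.mem_Bbar_second] at hb
    rcases ha with rfl | rfl | rfl | rfl <;> rcases hb with rfl | rfl | rfl
      <;> simp [PEquiv.update_apply, PEquiv.symm_update, PEquiv.single_apply_of_ne, hd]
        at ha₁ hb₁ ⊢
      <;> intro
      <;> linarith [X.u_a11_b22_lt_u_a11_b21, X.h21_3, X.h22_1, X.hb21_2]

theorem isConjecture_a12_wait :
    IsConjecture M E (PEquiv.single a11 b11)
      (((PEquiv.single a11 b11).update a21 b21).update a22 b22) := by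
  have hd := X.distinct
  refine .of_single ((X.mem_Abar_first _).2 (Or.inl rfl)) ((X.mem_Bbar_first _).2 rfl)
    (by simp [PEquiv.update_apply, hd]) (fun a b h => ?_) (fun a b h => ?_) ?_
  · rcases PEquiv.eq_some_of_update_update_single h with ⟨rfl, rfl⟩ | ⟨rfl, rfl⟩ | ⟨rfl, rfl⟩
      <;> simp [X.mem_Abar_second, X.mem_Bbar_second]
  · rcases PEquiv.eq_some_of_update_update_single h with ⟨rfl, rfl⟩ | ⟨rfl, rfl⟩ | ⟨rfl, rfl⟩
      <;> constructor
      <;> linarith [X.h11_3, X.h11_4, X.h21_1, X.h22_1, X.h22_2, X.hb11_1, X.hb11_2, X.hb21_3,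
        X.hb22_2]
  · intro a ha b hb ha₁ hb₁
    rw [X.mem_Abar_second] at ha
    rw [X.mem_Bbar_second] at hb
    rcases ha with rfl | rfl | rfl | rfl <;> rcases hb with rfl | rfl | rfl
      <;> simp [PEquiv.update_apply, PEquiv.symm_update, PEquiv.single_apply_of_ne, hd]
        at ha₁ hb₁ ⊢
      <;> intro
      <;> linarith [X.h12_2, X.h12_3, X.h21_1, X.h21_3, X.h22_1]

variable {G : Economy A B 2}

section mL

variable {mL : Matching A B} (hL1_11 : (mL.pm (E.trunc one_le_two)).mA a11 = some b11)
include hL1_11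

theorem stableAt_first_mL (hG : G.IsDirac E)
    (hL1_12 : (mL.pm (E.trunc one_le_two)).mA a12 = none) (hL2_12 : (mL.pm E).mA a12 = none) :
    StableAt M G mL (E.trunc one_le_two) := by
  have hd := X.distinct
  have hU11 : Upay M G mL a11 (E.trunc one_le_two) = M.u a11 b11 :=
    Upay_trunc_of_eq_some hG _ hL1_11
  have hU12 : Upay M G mL a12 (E.trunc one_le_two) = 0 := by
    rw [Upay_trunc_of_eq_none hG hL1_12, hL2_12, Option.elim_none, mul_zero]
  have hV11 : Vpay M G mL b11 (E.trunc one_le_two) = M.v a11 b11 :=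
    Vpay_trunc_of_eq_some hG _ (((mL.pm _).inv _ _).1 hL1_11)
  refine stableAt_first hG (fun a ha => ?_) (fun b hb => ?_) fun a ha b hb => ?_
  · rcases (X.mem_Abar_first a).1 ha with rfl | rfl
    · refine ⟨_, _, X.isConjecture_a11_wait_L, PEquiv.single_apply_of_ne X.hA1.symm _, ?_⟩
      simpa [PEquiv.update_apply, hd, hU11] using X.h11_3.le
    · refine ⟨_, _, X.isConjecture_a12_wait, PEquiv.single_apply_of_ne X.hA1 _, ?_⟩
      simp [PEquiv.update_apply, PEquiv.single_apply_of_ne, hd, hU12]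
  · obtain rfl := (X.mem_Bbar_first b).1 hb
    refine ⟨⊥, _, X.isConjecture_b11_wait, PEquiv.bot_apply _, ?_⟩
    simpa [PEquiv.update_apply, PEquiv.symm_update, hd, hV11] using
      X.dB_mul_v_a12_b11_le.trans X.hb11_1.le
  · obtain rfl := (X.mem_Bbar_first b).1 hb
    rcases (X.mem_Abar_first a).1 ha with rfl | rfl
    · rw [hU11]
      exact fun h => lt_irrefl _ h.1
    · rw [hV11]
      exact fun h => lt_asymm h.2 X.hb11_1

theorem isStaticStable_mL (hL2_12 : (mL.pm E).mA a12 = none)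
    (hL2_21 : (mL.pm E).mA a21 = some b21) (hL2_22 : (mL.pm E).mA a22 = some b22) :
    IsStaticStable M (availA mL E) (availB mL E) (mL.pm E).mA (mL.pm E).mB := by
  have hL2B21 : (mL.pm E).mB b21 = some a21 := ((mL.pm E).inv _ _).1 hL2_21
  have hL2B22 : (mL.pm E).mB b22 = some a22 := ((mL.pm E).inv _ _).1 hL2_22
  have hA : ∀ a ∈ availA mL E, a = a12 ∨ a = a21 ∨ a = a22 := fun a ha => by
    rw [availA, Finset.mem_filter, X.mem_Abar_second] at ha
    rcases ha with ⟨rfl | h, hfree⟩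
    · exact absurd (hL1_11.symm.trans hfree) (Option.some_ne_none _)
    · exact h
  have hB : ∀ b ∈ availB mL E, b = b21 ∨ b = b22 := fun b hb => by
    rw [availB, Finset.mem_filter, X.mem_Bbar_second] at hb
    rcases hb with ⟨rfl | h, hfree⟩
    · exact absurd ((((mL.pm _).inv _ _).1 hL1_11).symm.trans hfree) (Option.some_ne_none _)
    · exact h
  refine ⟨fun a ha => ?_, fun b hb => ?_, ?_⟩
  · rcases hA a ha with rfl | rfl | rfl <;> simp [hL2_12, hL2_21, hL2_22] <;>
      linarith [X.h21_1, X.h22_1, X.h22_2]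
  · rcases hB b hb with rfl | rfl <;> simp [hL2B21, hL2B22] <;> linarith [X.hb21_3, X.hb22_2]
  · rintro ⟨a, ha, b, hb, hu, hv⟩
    rcases hA a ha with rfl | rfl | rfl <;> rcases hB b hb with rfl | rfl <;>
      simp [hL2_12, hL2_21, hL2_22, hL2B21, hL2B22] at hu hv <;>
      linarith [X.h12_2, X.h12_3, X.h21_1, X.h21_3, X.h22_1]

end mL

section mR

variable {mR : Matching A B} (hR1_12 : (mR.pm (E.trunc one_le_two)).mA a12 = some b11)
include hR1_12

theorem stableAt_first_mR (hG : G.IsDirac E)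
    (hR1_11 : (mR.pm (E.trunc one_le_two)).mA a11 = none) (hR2_11 : (mR.pm E).mA a11 = some b21) :
    StableAt M G mR (E.trunc one_le_two) := by
  have hd := X.distinct
  have hU11 : Upay M G mR a11 (E.trunc one_le_two) = M.dA a11 * M.u a11 b21 := by
    rw [Upay_trunc_of_eq_none hG hR1_11, hR2_11, Option.elim_some]
  have hU12 : Upay M G mR a12 (E.trunc one_le_two) = M.u a12 b11 :=
    Upay_trunc_of_eq_some hG _ hR1_12
  have hV11 : Vpay M G mR b11 (E.trunc one_le_two) = M.v a12 b11 :=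
    Vpay_trunc_of_eq_some hG _ (((mR.pm _).inv _ _).1 hR1_12)
  refine stableAt_first hG (fun a ha => ?_) (fun b hb => ?_) fun a ha b hb => ?_
  · rcases (X.mem_Abar_first a).1 ha with rfl | rfl
    · refine ⟨_, _, X.isConjecture_a11_wait_R, PEquiv.single_apply_of_ne X.hA1.symm _, ?_⟩
      simp [PEquiv.update_apply, hd, hU11]
    · refine ⟨_, _, X.isConjecture_a12_wait, PEquiv.single_apply_of_ne X.hA1 _, ?_⟩
      simpa [PEquiv.update_apply, PEquiv.single_apply_of_ne, hd, hU12] using X.h12_1.le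
  · obtain rfl := (X.mem_Bbar_first b).1 hb
    refine ⟨⊥, _, X.isConjecture_b11_wait, PEquiv.bot_apply _, ?_⟩
    simpa [PEquiv.update_apply, PEquiv.symm_update, hd, hV11] using X.dB_mul_v_a12_b11_le
  · obtain rfl := (X.mem_Bbar_first b).1 hb
    rcases (X.mem_Abar_first a).1 ha with rfl | rfl
    · rw [hU11]
      exact fun h => lt_asymm h.1 (X.h11_2.trans X.h11_1)
    · rw [hU12]
      exact fun h => lt_irrefl _ h.1

theorem isStaticStable_mR (hR2_11 : (mR.pm E).mA a11 = some b21)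
    (hR2_21 : (mR.pm E).mA a21 = none) (hR2_22 : (mR.pm E).mA a22 = some b22) :
    IsStaticStable M (availA mR E) (availB mR E) (mR.pm E).mA (mR.pm E).mB := by
  have hR2B21 : (mR.pm E).mB b21 = some a11 := ((mR.pm E).inv _ _).1 hR2_11
  have hR2B22 : (mR.pm E).mB b22 = some a22 := ((mR.pm E).inv _ _).1 hR2_22
  have hA : ∀ a ∈ availA mR E, a = a11 ∨ a = a21 ∨ a = a22 := fun a ha => by
    rw [availA, Finset.mem_filter, X.mem_Abar_second] at ha
    rcases ha with ⟨rfl | rfl | h, hfree⟩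
    · exact Or.inl rfl
    · exact absurd (hR1_12.symm.trans hfree) (Option.some_ne_none _)
    · exact Or.inr h
  have hB : ∀ b ∈ availB mR E, b = b21 ∨ b = b22 := fun b hb => by
    rw [availB, Finset.mem_filter, X.mem_Bbar_second] at hb
    rcases hb with ⟨rfl | h, hfree⟩
    · exact absurd ((((mR.pm _).inv _ _).1 hR1_12).symm.trans hfree) (Option.some_ne_none _)
    · exact h
  refine ⟨fun a ha => ?_, fun b hb => ?_, ?_⟩
  · rcases hA a ha with rfl | rfl | rfl <;> simp [hR2_11, hR2_21, hR2_22] <;>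
      linarith [X.u_a11_b21_pos, X.h22_1, X.h22_2]
  · rcases hB b hb with rfl | rfl <;> simp [hR2B21, hR2B22] <;>
      linarith [X.hb21_2, X.hb21_3, X.hb22_2]
  · rintro ⟨a, ha, b, hb, hu, hv⟩
    rcases hA a ha with rfl | rfl | rfl <;> rcases hB b hb with rfl | rfl <;>
      simp [hR2_11, hR2_21, hR2_22, hR2B21, hR2B22] at hu hv <;>
      linarith [X.u_a11_b22_lt_u_a11_b21, X.hb21_2, X.h21_3, X.h21_1, X.h22_1]

end mR

end LoneWolfExample

end Example

/-- In the two-period economy with `A₁ = {a11,a12}`, `B₁ = {b11}`,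
`A₂ = {a21,a22}`, `B₂ = {b21,b22}` and the stated preferences, both `m^L` (period 1:
`a11–b11`; period 2: `a21–b21`, `a22–b22`; `a12` unmatched) and `m^R` (period 1:
`a12–b11`; period 2: `a11–b21`, `a22–b22`; `a21` unmatched) are dynamically stable,
and they leave different sets of agents unmatched: the Lone Wolf theorem fails. -/
theorem lone_wolf_failure_example {A B : Type}
    [DecidableEq A] [DecidableEq B] (M : Market A B)
    (a11 a12 a21 a22 : A) (b11 b21 b22 : B)
    (hA1 : a11 ≠ a12) (hA2 : a11 ≠ a21) (hA3 : a11 ≠ a22) (hA4 : a12 ≠ a21)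
    (hA5 : a12 ≠ a22) (hA6 : a21 ≠ a22)
    (hB1 : b11 ≠ b21) (hB2 : b11 ≠ b22) (hB3 : b21 ≠ b22)
    (E : Realization A B 2)
    (harrA0 : E.arrA ⟨0, by omega⟩ = {a11, a12})
    (harrA1 : E.arrA ⟨1, by omega⟩ = {a21, a22})
    (harrB0 : E.arrB ⟨0, by omega⟩ = {b11})
    (harrB1 : E.arrB ⟨1, by omega⟩ = {b21, b22})
    (G : Economy A B 2) (hG : ∀ F : Realization A B 2, 0 < G.prob F ↔ F = E)
    -- a11: (b21,1) ≻ (b22,0) ≻ (b11,0) ≻ (b22,1) ≻ single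
    (h11_1 : M.u a11 b22 < M.dA a11 * M.u a11 b21)
    (h11_2 : M.u a11 b11 < M.u a11 b22)
    (h11_3 : M.dA a11 * M.u a11 b22 < M.u a11 b11)
    (h11_4 : 0 < M.dA a11 * M.u a11 b22)
    -- a12: b11 ≻ single ≻ b21, b22
    (h12_1 : 0 < M.u a12 b11) (h12_2 : M.u a12 b21 < 0) (h12_3 : M.u a12 b22 < 0)
    -- a21: b21 ≻ single ≻ b11, b22
    (h21_1 : 0 < M.u a21 b21) (h21_2 : M.u a21 b11 < 0) (h21_3 : M.u a21 b22 < 0)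
    -- a22: b22 ≻ b21 ≻ single ≻ b11
    (h22_1 : M.u a22 b21 < M.u a22 b22) (h22_2 : 0 < M.u a22 b21) (h22_3 : M.u a22 b11 < 0)
    -- b11: a11 ≻ a12 ≻ single ≻ a21, a22
    (hb11_1 : M.v a12 b11 < M.v a11 b11) (hb11_2 : 0 < M.v a12 b11)
    -- b21: a22 ≻ a11 ≻ a21 ≻ single ≻ a12
    (hb21_1 : M.v a11 b21 < M.v a22 b21) (hb21_2 : M.v a21 b21 < M.v a11 b21)
    (hb21_3 : 0 < M.v a21 b21)
    -- b22: a11 ≻ a22 ≻ single ≻ a12, a21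
    (hb22_1 : M.v a22 b22 < M.v a11 b22) (hb22_2 : 0 < M.v a22 b22)
    (mL mR : Matching A B)
    (hL1_11 : (mL.pm (E.trunc (by omega : (1:ℕ) ≤ 2))).mA a11 = some b11)
    (hL1_12 : (mL.pm (E.trunc (by omega : (1:ℕ) ≤ 2))).mA a12 = none)
    (hL2_12 : (mL.pm E).mA a12 = none)
    (hL2_21 : (mL.pm E).mA a21 = some b21)
    (hL2_22 : (mL.pm E).mA a22 = some b22)
    (hR1_12 : (mR.pm (E.trunc (by omega : (1:ℕ) ≤ 2))).mA a12 = some b11)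
    (hR1_11 : (mR.pm (E.trunc (by omega : (1:ℕ) ≤ 2))).mA a11 = none)
    (hR2_12 : (mR.pm E).mA a12 = some b11)
    (hR2_11 : (mR.pm E).mA a11 = some b21)
    (hR2_21 : (mR.pm E).mA a21 = none)
    (hR2_22 : (mR.pm E).mA a22 = some b22) :
    mL ∈ DynStable M 2 G ∧ mR ∈ DynStable M 2 G ∧
    (mL.pm E).mA a12 = none ∧ (mR.pm E).mA a12 ≠ none ∧
    (mR.pm E).mA a21 = none ∧ (mL.pm E).mA a21 ≠ none := by
  have X : LoneWolfExample M E a11 a12 a21 a22 b11 b21 b22 :=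
    ⟨hA1, hA2, hA3, hA4, hA5, hA6, hB1, hB2, hB3, harrA0, harrA1, harrB0, harrB1, h11_1, h11_2,
      h11_3, h11_4, h12_1, h12_2, h12_3, h21_1, h21_2, h21_3, h22_1, h22_2, h22_3, hb11_1, hb11_2,
      hb21_1, hb21_2, hb21_3, hb22_1, hb22_2⟩
  have hG' : G.IsDirac E := Economy.IsDirac.of_pos_iff hG
  refine ⟨mem_dynStable_two hG' (X.stableAt_first_mL hL1_11 hG' hL1_12 hL2_12)
      (X.isStaticStable_mL hL1_11 hL2_12 hL2_21 hL2_22),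
    mem_dynStable_two hG' (X.stableAt_first_mR hR1_12 hG' hR1_11 hR2_11)
      (X.isStaticStable_mR hR1_12 hR2_11 hR2_21 hR2_22),
    hL2_12, hR2_12 ▸ Option.some_ne_none _, hR2_21, hL2_21 ▸ Option.some_ne_none _⟩

end DynMatch
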